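/- The number of lattice walks of length n from the origin to (p,q) is C(n, (n+p+q)/2) · C(n, (n-p+q)/2) when n+p+q is even and both (n+p+q)/2 and (n-p+q)/2 lie in [0,n], and 0 otherwise. -/
import Mathlib


/-- The four unit steps right, left, up, down. -/
def stepVec : Fin 4 → ℤ × ℤ
  | 0 => (1, 0)
  | 1 => (-1, 0)
  | 2 => (0, 1)
  | 3 => (0, -1)

/-- Position after `k` steps of the walk with step sequence `w`, starting at the origin. -/
def walkPos (w : ℕ → Fin 4) (k : ℕ) : ℤ × ℤ :=
  ∑ i ∈ Finset.range k, stepVec (w i)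

/-- Generalized area of the first `n` steps of the walk `w` starting at the origin:
`Σ_{k<n} x_k (y_{k+1} - y_k)`. -/
def walkArea (w : ℕ → Fin 4) (n : ℕ) : ℤ :=
  ∑ k ∈ Finset.range n, (walkPos w k).1 * (stepVec (w k)).2

/-- Extend a finite step sequence to `ℕ` (irrelevant steps after `n`). -/
def extSteps (n : ℕ) (w : Fin n → Fin 4) : ℕ → Fin 4 :=
  fun k => if h : k < n then w ⟨k, h⟩ else 0

/-- `walkCount n i j s` : the number of lattice walks of length `n` from the origin
to `(i, j)` with generalized area `s`. -/
def walkCount (n : ℕ) (i j s : ℤ) : ℕ :=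
  (Finset.univ.filter (fun w : Fin n → Fin 4 =>
    walkPos (extSteps n w) n = (i, j) ∧ walkArea (extSteps n w) n = s)).card

/-- `walkEndCount n p q` : the number of lattice walks of length `n` from the origin
to `(p, q)`. -/
def walkEndCount (n : ℕ) (p q : ℤ) : ℕ :=
  (Finset.univ.filter (fun w : Fin n → Fin 4 =>
    walkPos (extSteps n w) n = (p, q))).card

def e4 : Fin 4 ≃ Bool × Bool where
  toFun j := match j with
    | 0 => (true, true) | 1 => (false, false) | 2 => (true, false) | 3 => (false, true)
  invFun b := match b with
    | (true, true) => 0 | (false, false) => 1 | (true, false) => 2 | (false, true) => 3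
  left_inv := by decide
  right_inv := by decide

lemma e4_fst (j : Fin 4) :
    (stepVec j).1 + (stepVec j).2 = (if (e4 j).1 then (1:ℤ) else -1) := by
  fin_cases j <;> rfl

lemma e4_snd (j : Fin 4) :
    (stepVec j).1 - (stepVec j).2 = (if (e4 j).2 then (1:ℤ) else -1) := by
  fin_cases j <;> rfl

def walkE (n : ℕ) : (Fin n → Fin 4) ≃ (Fin n → Bool) × (Fin n → Bool) where
  toFun w := (fun i => (e4 (w i)).1, fun i => (e4 (w i)).2)
  invFun fg := fun i => e4.symm (fg.1 i, fg.2 i)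
  left_inv w := by funext i; simp
  right_inv fg := by
    ext i
    · have := e4.apply_symm_apply (fg.1 i, fg.2 i); simpa using congrArg Prod.fst this
    · have := e4.apply_symm_apply (fg.1 i, fg.2 i); simpa using congrArg Prod.snd this

lemma walkPos_ext (n : ℕ) (w : Fin n → Fin 4) :
    walkPos (extSteps n w) n = ∑ i : Fin n, stepVec (w i) := by
  unfold walkPos
  rw [← Fin.sum_univ_eq_sum_range (fun i => stepVec (extSteps n w i)) n]
  apply Finset.sum_congr rfl
  intro i _
  simp [extSteps, i.isLt]

lemma count_true (n k : ℕ) :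
    (Finset.univ.filter (fun f : Fin n → Bool =>
      (Finset.univ.filter (fun i => f i = true)).card = k)).card = n.choose k := by
  have key : (Finset.univ.filter (fun f : Fin n → Bool =>
      (Finset.univ.filter (fun i => f i = true)).card = k)).card
      = (Finset.powersetCard k (Finset.univ : Finset (Fin n))).card := by
    apply Finset.card_bij (fun f _ => Finset.univ.filter (fun i => f i = true))
    · intro f hf
      simp only [Finset.mem_filter, Finset.mem_univ, true_and] at hf
      simp [Finset.mem_powersetCard, hf]
    · intro f hf g hg h
      funext i
      have hi := Finset.ext_iff.mp h i
      simp only [Finset.mem_filter, Finset.mem_univ, true_and] at hi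
      exact Bool.eq_iff_iff.mpr hi
    · intro s hs
      refine ⟨fun i => decide (i ∈ s), ?_, ?_⟩
      · simp only [Finset.mem_powersetCard] at hs
        simp only [Finset.mem_filter, Finset.mem_univ, true_and]
        rw [← hs.2]
        congr 1
        ext i; simp
      · ext i; simp
  rw [key, Finset.card_powersetCard, Finset.card_fin]

lemma sum_ind (n : ℕ) (f : Fin n → Bool) :
    ∑ i, (if f i then (1:ℤ) else -1)
      = 2 * ((Finset.univ.filter (fun i => f i = true)).card : ℤ) - n := by
  have : ∀ i : Fin n, (if f i then (1:ℤ) else -1)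
      = 2 * (if f i then (1:ℤ) else 0) - 1 := by
    intro i; cases f i <;> simp
  rw [Finset.sum_congr rfl (fun i _ => this i), Finset.sum_sub_distrib,
    ← Finset.mul_sum, Finset.sum_boole]
  simp [Finset.card_fin]

lemma countB (n : ℕ) (c : ℤ) :
    ((Finset.univ.filter (fun f : Fin n → Bool =>
        ∑ i, (if f i then (1:ℤ) else -1) = c)).card : ℤ)
      = if 2 ∣ ((n:ℤ) + c) ∧ 0 ≤ ((n:ℤ) + c) / 2 ∧ ((n:ℤ) + c) / 2 ≤ n then
          (n.choose (((n:ℤ) + c) / 2).toNat : ℤ) else 0 := by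
  by_cases h : 2 ∣ ((n:ℤ) + c) ∧ 0 ≤ ((n:ℤ) + c) / 2 ∧ ((n:ℤ) + c) / 2 ≤ n
  · rw [if_pos h]
    rw [show (Finset.univ.filter (fun f : Fin n → Bool =>
        ∑ i, (if f i then (1:ℤ) else -1) = c))
      = (Finset.univ.filter (fun f : Fin n → Bool =>
        (Finset.univ.filter (fun i => f i = true)).card = (((n:ℤ) + c) / 2).toNat)) from ?_]
    · rw [count_true]
    · apply Finset.filter_congr
      intro f _
      rw [sum_ind]
      obtain ⟨h1, h2, h3⟩ := h
      omega
  · rw [if_neg h]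
    rw [Finset.filter_false_of_mem, Finset.card_empty]
    · rfl
    intro f _
    rw [sum_ind]
    intro hc
    have hcard : (Finset.univ.filter (fun i => f i = true)).card ≤ n := by
      calc _ ≤ (Finset.univ : Finset (Fin n)).card := Finset.card_filter_le _ _
        _ = n := Finset.card_fin n
    omega

lemma walkEndCount_split (n : ℕ) (p q : ℤ) :
    walkEndCount n p q =
      (Finset.univ.filter (fun f : Fin n → Bool =>
        ∑ i, (if f i then (1:ℤ) else -1) = p + q)).card *
      (Finset.univ.filter (fun g : Fin n → Bool =>
        ∑ i, (if g i then (1:ℤ) else -1) = p - q)).card := by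
  unfold walkEndCount
  rw [← Finset.card_product, ← Finset.filter_product, Finset.univ_product_univ]
  apply Finset.card_equiv (walkE n)
  intro w
  simp only [Finset.mem_filter, Finset.mem_univ, true_and, walkE, Equiv.coe_fn_mk]
  rw [walkPos_ext, Prod.ext_iff]
  have h1 : ∑ i : Fin n, (if (e4 (w i)).1 then (1:ℤ) else -1)
      = (∑ i : Fin n, stepVec (w i)).1 + (∑ i : Fin n, stepVec (w i)).2 := by
    rw [Prod.fst_sum, Prod.snd_sum, ← Finset.sum_add_distrib]
    exact Finset.sum_congr rfl fun i _ => (e4_fst (w i)).symm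
  have h2 : ∑ i : Fin n, (if (e4 (w i)).2 then (1:ℤ) else -1)
      = (∑ i : Fin n, stepVec (w i)).1 - (∑ i : Fin n, stepVec (w i)).2 := by
    rw [Prod.fst_sum, Prod.snd_sum, ← Finset.sum_sub_distrib]
    exact Finset.sum_congr rfl fun i _ => (e4_snd (w i)).symm
  rw [h1, h2]
  constructor
  · rintro ⟨hx, hy⟩; omega
  · rintro ⟨hx, hy⟩; omega


/-- Closed formula for the number of lattice walks from the origin to `(p,q)`. -/
theorem walkEndCount_eq_binomial (n : ℕ) (p q : ℤ) :
    (walkEndCount n p q : ℤ) =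
      if 2 ∣ ((n : ℤ) + p + q) ∧ 0 ≤ ((n : ℤ) + p + q) / 2 ∧ ((n : ℤ) + p + q) / 2 ≤ n
          ∧ 0 ≤ ((n : ℤ) - p + q) / 2 ∧ ((n : ℤ) - p + q) / 2 ≤ n then
        (n.choose (((n : ℤ) + p + q) / 2).toNat : ℤ) * n.choose (((n : ℤ) - p + q) / 2).toNat
      else 0 := by

  rw [walkEndCount_split, Nat.cast_mul, countB, countB,
    show (n:ℤ) + (p + q) = (n:ℤ) + p + q from by ring,
    show (n:ℤ) + (p - q) = (n:ℤ) + p - q from by ring]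
  by_cases h1 : 2 ∣ ((n:ℤ) + p + q) ∧ 0 ≤ ((n:ℤ) + p + q) / 2 ∧ ((n:ℤ) + p + q) / 2 ≤ n
  · by_cases h2 : 2 ∣ ((n:ℤ) + p - q) ∧ 0 ≤ ((n:ℤ) + p - q) / 2 ∧ ((n:ℤ) + p - q) / 2 ≤ n
    · rw [if_pos h1, if_pos h2, if_pos (by omega)]
      congr 1
      have hb : (((n:ℤ) - p + q) / 2).toNat ≤ n := by omega
      have he : (((n:ℤ) + p - q) / 2).toNat = n - (((n:ℤ) - p + q) / 2).toNat := by omega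
      rw [he, Nat.choose_symm hb]
    · have hne : ¬(2 ∣ ((n:ℤ) + p + q) ∧ 0 ≤ ((n:ℤ) + p + q) / 2 ∧ ((n:ℤ) + p + q) / 2 ≤ n
          ∧ 0 ≤ ((n:ℤ) - p + q) / 2 ∧ ((n:ℤ) - p + q) / 2 ≤ n) := by
        rintro ⟨hd, ha, hb, hc, hh⟩
        exact h2 (by omega)
      rw [if_neg h2, if_neg hne, mul_zero]
  · have hne : ¬(2 ∣ ((n:ℤ) + p + q) ∧ 0 ≤ ((n:ℤ) + p + q) / 2 ∧ ((n:ℤ) + p + q) / 2 ≤ n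
        ∧ 0 ≤ ((n:ℤ) - p + q) / 2 ∧ ((n:ℤ) - p + q) / 2 ≤ n) := by
      rintro ⟨hd, ha, hb, hc, hh⟩
      exact h1 ⟨hd, ha, hb⟩
    rw [if_neg h1, if_neg hne, zero_mul]
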